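/- arXiv:1302.6558 — 2 statements merged into one kernel-verified Lean document; each statement's English description precedes it below -/
import Mathlib

section
/- For all integers n ≥ 1 and k ≥ 0, the number of subexcedant sequences of length n and weight k equals the number of permutations π ∈ S_n with maj π = k; more precisely, the map ψ restricts to a bijection from S(k,n) onto {π ∈ S_n : maj π = k}. -/
/-- `rot u k` is the permutation `[[u,k]]` of `{1,…,u} ⊆ ℕ` obtained by `k`
right circular shifts of the first `u` entries of the identity (positions are
1-based; all other natural numbers are fixed): `[[u,k]] i = u - k + i` for
`1 ≤ i ≤ k`, `[[u,k]] i = i - k` for `k < i ≤ u` and `[[u,k]] i = i` for `i > u`.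
It is (junk-)defined as the identity when `¬ k < u`. -/
def rot (u k : ℕ) : Equiv.Perm ℕ :=
  if _h : k < u then
    { toFun := fun i =>
        if 1 ≤ i ∧ i ≤ k then u - k + i
        else if k < i ∧ i ≤ u then i - k
        else i
      invFun := fun j =>
        if u - k + 1 ≤ j ∧ j ≤ u then j - (u - k)
        else if 1 ≤ j ∧ j ≤ u - k then j + k
        else j
      left_inv := by intro i; dsimp only; split_ifs <;> omega
      right_inv := by intro j; dsimp only; split_ifs <;> omega }
  else 1

/-- `psi n t = [[n, t n]] · [[n-1, t (n-1)]] · ⋯ · [[2, t 2]] · [[1, t 1]]`, where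
permutations act on indices, i.e. `(σ * τ) i = σ (τ i)`.  When `t` is a subexcedant
sequence of length `n`, `t` is called the McMahon code of the permutation `psi n t`. -/
def psi (n : ℕ) (t : ℕ → ℕ) : Equiv.Perm ℕ :=
  ((List.range n).reverse.map (fun i => rot (i + 1) (t (i + 1)))).prod

/-- `c` is a subexcedant sequence of length `n`: `0 ≤ c i ≤ i - 1` for `1 ≤ i ≤ n`
(positions are 1-based). -/
def Subexcedant (n : ℕ) (c : ℕ → ℕ) : Prop :=
  ∀ i, 1 ≤ i → i ≤ n → c i ≤ i - 1

/-- The major index of a permutation of `{1,…,n}`: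
`maj π = ∑_{1 ≤ i < n, π i > π (i+1)} i`. -/
def maj (n : ℕ) (π : Equiv.Perm ℕ) : ℕ :=
  ∑ i ∈ Finset.Ico 1 n, if π (i + 1) < π i then i else 0

/-!
`ψ` is built one factor at a time, `ψₙ₊₁(t) = [[n+1, tₙ₊₁]] · ψₙ(t)`. Left multiplication by
`[[n+1, c]]` raises the `c` smallest values above all others, which toggles the descent at `i`
exactly when one of `σ i`, `σ (i+1)` is `≤ c`; summing by parts, the major index grows by the
number of such values, namely `c`. Hence `maj ψ(t) = Σ tᵢ`. Conversely `ψₙ₊₁(t)` sends `n+1`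
to `n+1 - tₙ₊₁`, so the last entry of the code of `π` is read off from `π (n+1)` and the rest
recursively from `[[n+1, c]]⁻¹ π ∈ Sₙ`; this gives both injectivity and surjectivity.
-/
theorem Equiv.Perm.apply_mem_iff_of_setOf_ne_subset {α : Type*} {σ : Equiv.Perm α}
    {s : Finset α} (hs : {a | σ a ≠ a} ⊆ s) (x : α) : σ x ∈ s ↔ x ∈ s := by
  conv_lhs => rw [← Finset.map_perm hs]
  exact Finset.mem_map' _

/-- `π` is (the extension to `ℕ` of) a permutation in `S_n`. -/
def FixesOutside (n : ℕ) (π : Equiv.Perm ℕ) : Prop :=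
  ∀ i, i = 0 ∨ n < i → π i = i

namespace FixesOutside

variable {n : ℕ} {σ τ : Equiv.Perm ℕ}

theorem mono {m : ℕ} (h : FixesOutside n σ) (hnm : n ≤ m) : FixesOutside m σ :=
  fun i hi => h i (by omega)

theorem mul (hσ : FixesOutside n σ) (hτ : FixesOutside n τ) : FixesOutside n (σ * τ) := by
  intro i hi
  rw [Equiv.Perm.mul_apply, hτ i hi, hσ i hi]

theorem setOf_ne_subset (h : FixesOutside n σ) : {a | σ a ≠ a} ⊆ ↑(Finset.Icc 1 n) := by
  intro a ha
  by_contra hout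
  exact ha (h a (by simp at hout; omega))

theorem apply_mem_Icc (h : FixesOutside n σ) {i : ℕ} (hi : i ∈ Finset.Icc 1 n) :
    σ i ∈ Finset.Icc 1 n :=
  (Equiv.Perm.apply_mem_iff_of_setOf_ne_subset h.setOf_ne_subset i).2 hi

theorem sum_Ico_ite_apply_le (hσ : FixesOutside n σ) {c : ℕ} (hc : c ≤ n) :
    ∑ i ∈ Finset.Ico 1 (n + 1), (if σ i ≤ c then 1 else 0) = c := by
  have hsupp : {a | σ a ≠ a} ⊆ ↑(Finset.Ico 1 (n + 1)) := by
    simpa [Finset.Ico_add_one_right_eq_Icc] using hσ.setOf_ne_subset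
  rw [Equiv.Perm.sum_comp σ _ (fun j => if j ≤ c then 1 else 0) hsupp, Finset.sum_boole]
  have : (Finset.Ico 1 (n + 1)).filter (· ≤ c) = Finset.Ico 1 (c + 1) := by
    ext j; simp only [Finset.mem_filter, Finset.mem_Ico]; omega
  simp [this]

end FixesOutside

theorem rot_apply_of_mem_Icc {u k v : ℕ} (hk : k < u) (hv : v ∈ Finset.Icc 1 u) :
    rot u k v = if v ≤ k then u - k + v else v - k := by
  rw [Finset.mem_Icc] at hv
  simp only [rot, dif_pos hk, Equiv.coe_fn_mk]
  split_ifs <;> omega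

theorem rot_apply_self {u k : ℕ} (hk : k < u) : rot u k u = u - k := by
  rw [rot_apply_of_mem_Icc hk (by simp; omega), if_neg (by omega)]

theorem fixesOutside_rot (u k : ℕ) : FixesOutside u (rot u k) := by
  intro i hi
  by_cases hk : k < u
  · simp only [rot, dif_pos hk, Equiv.coe_fn_mk]
    split_ifs <;> omega
  · simp [rot, hk]

/-- Left multiplication by `[[u,c]]` keeps the relative order of two values in `{1,…,u}`
unless exactly one of them is `≤ c`, in which case it reverses it. -/
theorem descent_rot_add {u c a b : ℕ} (hc : c < u) (ha : a ∈ Finset.Icc 1 u)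
    (hb : b ∈ Finset.Icc 1 u) (i : ℕ) :
    (if rot u c b < rot u c a then i else 0) + i * (if b ≤ c then 1 else 0) =
      (if b < a then i else 0) + i * (if a ≤ c then 1 else 0) := by
  rw [rot_apply_of_mem_Icc hc ha, rot_apply_of_mem_Icc hc hb]
  rw [Finset.mem_Icc] at ha hb
  split_ifs <;> omega

theorem sum_Ico_mul_succ_add_sum_Ico (m : ℕ) (g : ℕ → ℕ) :
    ∑ i ∈ Finset.Ico 1 m, i * g (i + 1) + ∑ i ∈ Finset.Ico 1 m, g i =
      ∑ i ∈ Finset.Ico 1 m, i * g i + (m - 1) * g m := by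
  induction m with
  | zero => simp
  | succ m ih =>
    rcases Nat.eq_zero_or_pos m with rfl | hm
    · simp
    · simp only [Finset.sum_Ico_succ_top hm, Nat.add_sub_cancel]
      obtain ⟨m, rfl⟩ : ∃ m', m = m' + 1 := ⟨m - 1, by omega⟩
      simp only [Nat.add_sub_cancel] at ih ⊢
      linarith

theorem maj_rot_mul {n c : ℕ} (hc : c ≤ n) {σ : Equiv.Perm ℕ} (hσ : FixesOutside n σ) :
    maj (n + 1) (rot (n + 1) c * σ) = maj (n + 1) σ + c := by
  set χ : ℕ → ℕ := fun i => if σ i ≤ c then 1 else 0 with hχ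
  have hχ_top : χ (n + 1) = 0 := by simp [hχ, hσ (n + 1) (by omega)]; omega
  have hlocal : ∀ i ∈ Finset.Ico 1 (n + 1),
      (if (rot (n + 1) c * σ) (i + 1) < (rot (n + 1) c * σ) i then i else 0) + i * χ (i + 1) =
        (if σ (i + 1) < σ i then i else 0) + i * χ i := by
    intro i hi
    have hmem : ∀ j ∈ Finset.Icc 1 (n + 1), σ j ∈ Finset.Icc 1 (n + 1) :=
      fun j hj => (hσ.mono n.le_succ).apply_mem_Icc hj
    rw [Finset.mem_Ico] at hi
    exact descent_rot_add (by omega) (hmem i (by simp; omega)) (hmem (i + 1) (by simp; omega)) i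
  have hsum := Finset.sum_congr rfl hlocal
  rw [Finset.sum_add_distrib, Finset.sum_add_distrib] at hsum
  have htel := sum_Ico_mul_succ_add_sum_Ico (n + 1) χ
  rw [hχ_top, hσ.sum_Ico_ite_apply_le hc] at htel
  unfold maj
  omega

theorem maj_succ_of_fixesOutside {n : ℕ} {σ : Equiv.Perm ℕ} (hσ : FixesOutside n σ) :
    maj (n + 1) σ = maj n σ := by
  rcases Nat.eq_zero_or_pos n with rfl | hn
  · simp [maj]
  · have hlast : σ n < σ (n + 1) := by
      rw [hσ (n + 1) (by omega)]
      have := Finset.mem_Icc.1 (hσ.apply_mem_Icc (Finset.mem_Icc.2 ⟨hn, le_rfl⟩))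
      omega
    rw [maj, Finset.sum_Ico_succ_top hn, if_neg hlast.not_gt, add_zero, maj]

theorem psi_succ (n : ℕ) (t : ℕ → ℕ) : psi (n + 1) t = rot (n + 1) (t (n + 1)) * psi n t := by
  simp [psi, List.range_succ]

theorem fixesOutside_psi (n : ℕ) (t : ℕ → ℕ) : FixesOutside n (psi n t) := by
  induction n with
  | zero => intro i _; rfl
  | succ n ih => rw [psi_succ]; exact (fixesOutside_rot _ _).mul (ih.mono n.le_succ)

theorem psi_succ_apply_self {n : ℕ} {t : ℕ → ℕ} (ht : t (n + 1) ≤ n) :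
    psi (n + 1) t (n + 1) = n + 1 - t (n + 1) := by
  rw [psi_succ, Equiv.Perm.mul_apply, fixesOutside_psi n t (n + 1) (by omega),
    rot_apply_self (by omega)]

theorem psi_congr {n : ℕ} {s t : ℕ → ℕ} (h : Set.EqOn s t (Set.Icc 1 n)) : psi n s = psi n t := by
  induction n with
  | zero => rfl
  | succ n ih =>
    rw [psi_succ, psi_succ, h (by simp : n + 1 ∈ Set.Icc 1 (n + 1)),
      ih (h.mono (Set.Icc_subset_Icc_right n.le_succ))]

theorem Subexcedant.mono {n m : ℕ} {t : ℕ → ℕ} (ht : Subexcedant m t) (hnm : n ≤ m) :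
    Subexcedant n t :=
  fun i h1 h2 => ht i h1 (h2.trans hnm)

theorem maj_psi {n : ℕ} {t : ℕ → ℕ} (ht : Subexcedant n t) :
    maj n (psi n t) = ∑ i ∈ Finset.Icc 1 n, t i := by
  induction n with
  | zero => rfl
  | succ n ih =>
    have htop : t (n + 1) ≤ n := by have := ht (n + 1) (by omega) le_rfl; omega
    rw [psi_succ, maj_rot_mul htop (fixesOutside_psi n t),
      maj_succ_of_fixesOutside (fixesOutside_psi n t), ih (ht.mono n.le_succ),
      Finset.sum_Icc_succ_top (by omega)]

theorem eqOn_of_psi_eq {n : ℕ} {s t : ℕ → ℕ} (hs : Subexcedant n s) (ht : Subexcedant n t)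
    (h : psi n s = psi n t) : Set.EqOn s t (Set.Icc 1 n) := by
  induction n with
  | zero => simp
  | succ n ih =>
    have hs_top : s (n + 1) ≤ n := by have := hs (n + 1) (by omega) le_rfl; omega
    have ht_top : t (n + 1) ≤ n := by have := ht (n + 1) (by omega) le_rfl; omega
    have htop : s (n + 1) = t (n + 1) := by
      have := congrArg (· (n + 1)) h
      simp only [psi_succ_apply_self hs_top, psi_succ_apply_self ht_top] at this
      omega
    rw [psi_succ, psi_succ, htop, mul_right_inj] at h
    intro i hi
    rcases (Set.mem_Icc.1 hi).2.eq_or_lt with rfl | hlt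
    · exact htop
    · exact ih (hs.mono n.le_succ) (ht.mono n.le_succ) h ⟨hi.1, by omega⟩

theorem exists_psi_eq {n : ℕ} {π : Equiv.Perm ℕ} (hπ : FixesOutside n π) :
    ∃ t, Subexcedant n t ∧ (∀ i, i = 0 ∨ n < i → t i = 0) ∧ psi n t = π := by
  induction n generalizing π with
  | zero =>
    exact ⟨0, fun i h1 h2 => by omega, fun _ _ => rfl,
      Equiv.ext fun i => (hπ i (by omega)).symm⟩
  | succ n ih =>
    set c := n + 1 - π (n + 1)
    have hπ_top := Finset.mem_Icc.1 (hπ.apply_mem_Icc (Finset.right_mem_Icc.2 (by omega)))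
    have hc : c ≤ n := by omega
    have hσ : FixesOutside n ((rot (n + 1) c)⁻¹ * π) := by
      intro i hi
      rw [Equiv.Perm.mul_apply, Equiv.Perm.inv_eq_iff_eq]
      rcases (show i = 0 ∨ n + 1 < i ∨ i = n + 1 by omega) with h | h | rfl
      · rw [hπ i (.inl h), fixesOutside_rot _ _ i (.inl h)]
      · rw [hπ i (.inr h), fixesOutside_rot _ _ i (.inr h)]
      · rw [rot_apply_self (by omega)]; omega
    obtain ⟨s, hs, hs_zero, hψ⟩ := ih hσ
    refine ⟨Function.update s (n + 1) c, ?_, ?_, ?_⟩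
    · intro i h1 h2
      rcases eq_or_ne i (n + 1) with rfl | hne
      · simp only [Function.update_self]; omega
      · rw [Function.update_of_ne hne]; exact hs i h1 (by omega)
    · intro i hi
      rw [Function.update_of_ne (by omega)]
      exact hs_zero i (by omega)
    · have hcongr : psi n (Function.update s (n + 1) c) = psi n s :=
        psi_congr fun i hi => Function.update_of_ne (by simp at hi; omega) _ _
      rw [psi_succ, Function.update_self, hcongr, hψ, mul_inv_cancel_left]

theorem psi_bijOn_fixed_weight_general (n k : ℕ) :
    Set.BijOn (psi n)
      {c : ℕ → ℕ | Subexcedant n c ∧ (∀ i, i = 0 ∨ n < i → c i = 0) ∧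
        ∑ i ∈ Finset.Icc 1 n, c i = k}
      {π : Equiv.Perm ℕ | (∀ i, i = 0 ∨ n < i → π i = i) ∧ maj n π = k} ∧
    {c : ℕ → ℕ | Subexcedant n c ∧ (∀ i, i = 0 ∨ n < i → c i = 0) ∧
        ∑ i ∈ Finset.Icc 1 n, c i = k}.ncard =
      {π : Equiv.Perm ℕ | (∀ i, i = 0 ∨ n < i → π i = i) ∧ maj n π = k}.ncard := by
  refine (fun h : Set.BijOn _ _ _ => ⟨h, h.ncard_eq⟩) ⟨?_, ?_, ?_⟩
  · exact fun t ht => ⟨fixesOutside_psi n t, (maj_psi ht.1).trans ht.2.2⟩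
  · intro s ⟨hs, hs_zero, _⟩ t ⟨ht, ht_zero, _⟩ h
    funext i
    by_cases hi : i ∈ Set.Icc 1 n
    · exact eqOn_of_psi_eq hs ht h hi
    · have hout : i = 0 ∨ n < i := by simp at hi; omega
      rw [hs_zero i hout, ht_zero i hout]
  · rintro π ⟨hπ, hmaj⟩
    obtain ⟨t, ht, ht_zero, rfl⟩ := exists_psi_eq hπ
    exact ⟨t, ⟨ht, ht_zero, (maj_psi ht).symm.trans hmaj⟩, rfl⟩

/-- for `n ≥ 1` and `k ≥ 0`, the map `ψ` restricts to a bijection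
from `S(k,n)` (subexcedant sequences of length `n` and weight `k`, encoded as
functions vanishing outside positions `1,…,n`) onto the set of permutations
`π ∈ S_n` with `maj π = k`; in particular the two sets have the same number of
elements. -/
theorem psi_bijOn_fixed_weight (n k : ℕ) (hn : 1 ≤ n) :
    Set.BijOn (psi n)
      {c : ℕ → ℕ | Subexcedant n c ∧ (∀ i, i = 0 ∨ n < i → c i = 0) ∧
        ∑ i ∈ Finset.Icc 1 n, c i = k}
      {π : Equiv.Perm ℕ | (∀ i, i = 0 ∨ n < i → π i = i) ∧ maj n π = k} ∧
    {c : ℕ → ℕ | Subexcedant n c ∧ (∀ i, i = 0 ∨ n < i → c i = 0) ∧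
        ∑ i ∈ Finset.Icc 1 n, c i = k}.ncard =
      {π : Equiv.Perm ℕ | (∀ i, i = 0 ∨ n < i → π i = i) ∧ maj n π = k}.ncard :=
  psi_bijOn_fixed_weight_general n k
end

section
/- Let n, u, v be integers with n ≥ 3, 0 ≤ u ≤ n−2, and 1 ≤ v ≤ n−2. Define σ = [[n,u]]·[[n−1,v]] and τ = [[n,u+1]]·[[n−1,v−1]] in S_n. Then τ = σ·⟨n,v⟩, where ⟨n,v⟩ is the transposition exchanging n and v. -/
theorem rot_apply_of_lt {u k : ℕ} (hk : k < u) (i : ℕ) :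
    rot u k i = if 1 ≤ i ∧ i ≤ k then u - k + i else if k < i ∧ i ≤ u then i - k else i := by
  simp [rot, dif_pos hk]

theorem rot_apply_of_gt (u k : ℕ) {i : ℕ} (hi : u < i) : rot u k i = i := by
  by_cases hk : k < u
  · rw [rot_apply_of_lt hk]
    split_ifs <;> omega
  · simp [rot, dif_neg hk]

theorem rot_apply_succ {u k : ℕ} (hk : k < u) : rot u k (k + 1) = 1 := by
  rw [rot_apply_of_lt hk]
  split_ifs <;> omega

theorem rot_add {u k l : ℕ} (h : k + l < u) : rot u (k + l) = rot u k * rot u l := by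
  ext i
  simp only [Equiv.Perm.mul_apply, rot_apply_of_lt h, rot_apply_of_lt (show k < u by omega),
    rot_apply_of_lt (show l < u by omega)]
  split_ifs <;> omega

theorem rot_succ_one {m : ℕ} (hm : 1 < m) : rot (m + 1) 1 = rot m 1 * Equiv.swap 1 (m + 1) := by
  ext i
  simp only [Equiv.Perm.mul_apply, rot_apply_of_lt hm, rot_apply_of_lt (Nat.lt_succ_of_lt hm),
    Equiv.swap_apply_def]
  split_ifs <;> omega

/-- for `n ≥ 3`, `0 ≤ u ≤ n-2` and `1 ≤ v ≤ n-2`, if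
`σ = [[n,u]]·[[n-1,v]]` and `τ = [[n,u+1]]·[[n-1,v-1]]`, then `τ = σ·⟨n,v⟩`
where `⟨n,v⟩` is the transposition exchanging `n` and `v`. -/
theorem rot_succ_mul_rot_pred (n u v : ℕ) (hn : 3 ≤ n)
    (hu : u ≤ n - 2) (hv1 : 1 ≤ v) (hv2 : v ≤ n - 2) :
    rot n (u + 1) * rot (n - 1) (v - 1) =
      (rot n u * rot (n - 1) v) * Equiv.swap n v := by
  obtain ⟨m, rfl⟩ : ∃ m, n = m + 1 := ⟨n - 1, by omega⟩
  obtain ⟨k, rfl⟩ : ∃ k, v = k + 1 := ⟨v - 1, by omega⟩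
  simp only [Nat.add_sub_cancel]
  have hswap : Equiv.swap 1 (m + 1) * rot m k = rot m k * Equiv.swap (k + 1) (m + 1) := by
    rw [Equiv.mul_swap_eq_swap_mul, rot_apply_succ (by omega),
      rot_apply_of_gt m k (Nat.lt_succ_self m)]
  calc rot (m + 1) (u + 1) * rot m k
      = rot (m + 1) u * rot m 1 * (Equiv.swap 1 (m + 1) * rot m k) := by
        rw [rot_add (by omega), rot_succ_one (by omega), mul_assoc, mul_assoc, mul_assoc]
    _ = rot (m + 1) u * rot m (k + 1) * Equiv.swap (m + 1) (k + 1) := by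
        rw [hswap, Nat.add_comm k 1, rot_add (by omega), Equiv.swap_comm]
        simp only [mul_assoc]
end
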